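/- arXiv:1005.2861 — 6 statements merged into one kernel-verified Lean document; each statement's English description precedes it below -/
import Mathlib

section
/- For all integers n ≥ k ≥ 1, G_k(n) ≥ 2ⁿ · (2^{\binom{n}{k}} − n · 2^{\binom{n−1}{k}}). -/
/-- A `k`-clause on `n` Boolean variables: a finite set of literals (variable, sign)
with `k` literals on `k` distinct variables. -/
def IsClause (n k : ℕ) (D : Finset (Fin n × Bool)) : Prop :=
  D.card = k ∧ (D.image Prod.fst).card = k

/-- An assignment `x` satisfies a clause (a conjunction of literals) if it makes
every literal true. -/
def SatClause {n : ℕ} (D : Finset (Fin n × Bool)) (x : Fin n → Bool) : Prop :=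
  ∀ p ∈ D, x p.1 = p.2

/-- A `k`-SAT formula on `n` variables: a nonempty finite set of `k`-clauses,
interpreted as the disjunction of its clauses. -/
def IsFormula (n k : ℕ) (C : Finset (Finset (Fin n × Bool))) : Prop :=
  C.Nonempty ∧ ∀ D ∈ C, IsClause n k D

/-- `F(C)`: the set of satisfying assignments of a formula `C`. -/
def SatSet {n : ℕ} (C : Finset (Finset (Fin n × Bool))) : Set (Fin n → Bool) :=
  {x | ∃ D ∈ C, SatClause D x}

/-- A formula is irredundant if every proper subformula has a strictly smaller
set of satisfying assignments. -/
def Irredundant {n : ℕ} (C : Finset (Finset (Fin n × Bool))) : Prop :=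
  ∀ C' ⊂ C, SatSet C' ⊂ SatSet C

/-- The `k`-SAT functions of `n` variables, identified with their sets of
satisfying assignments. -/
def SatFunctions (n k : ℕ) : Set (Set (Fin n → Bool)) :=
  {S | ∃ C, IsFormula n k C ∧ SatSet C = S}

/-- `G_k(n)`: the number of `k`-SAT functions of `n` variables. -/
noncomputable def numSatFunctions (k n : ℕ) : ℕ := Nat.card (SatFunctions n k)

/-- `I_k(n)`: the number of irredundant `k`-SAT formulas on `n` variables. -/
noncomputable def numIrredundant (k n : ℕ) : ℕ :=
  Nat.card {C : Finset (Finset (Fin n × Bool)) // IsFormula n k C ∧ Irredundant C}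

def clauseOf {n : ℕ} (z : Fin n → Bool) (S : Finset (Fin n)) : Finset (Fin n × Bool) :=
  S.image fun i => (i, z i)

def cubeSet {n : ℕ} (z : Fin n → Bool) (A : Finset (Finset (Fin n))) : Set (Fin n → Bool) :=
  {x | ∃ S ∈ A, ∀ i ∈ S, x i = z i}

lemma satSet_image {n : ℕ} (z : Fin n → Bool) (A : Finset (Finset (Fin n))) :
    SatSet (A.image (clauseOf z)) = cubeSet z A := by
  ext x
  simp only [SatSet, SatClause, Set.mem_setOf_eq, cubeSet, Finset.mem_image]
  constructor
  · rintro ⟨D, ⟨S, hS, rfl⟩, hsat⟩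
    exact ⟨S, hS, fun i hi => hsat (i, z i) (Finset.mem_image_of_mem _ hi)⟩
  · rintro ⟨S, hS, hagr⟩
    refine ⟨clauseOf z S, ⟨S, hS, rfl⟩, ?_⟩
    rintro ⟨i, b⟩ hp
    simp only [clauseOf, Finset.mem_image, Prod.mk.injEq] at hp
    obtain ⟨j, hj, rfl, rfl⟩ := hp
    exact hagr j hj

lemma isClause_clauseOf {n k : ℕ} (z : Fin n → Bool) (S : Finset (Fin n))
    (hS : S.card = k) : IsClause n k (clauseOf z S) := by
  have hinj : Function.Injective (fun i : Fin n => (i, z i)) := fun a b h => congrArg Prod.fst h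
  constructor
  · rw [clauseOf, Finset.card_image_of_injective _ hinj, hS]
  · have : (clauseOf z S).image Prod.fst = S := by
      simp [clauseOf, Finset.image_image]
      exact Finset.image_id'
    rw [this, hS]

lemma cubeSet_subset_mono {n k : ℕ} (z : Fin n → Bool) (A A' : Finset (Finset (Fin n)))
    (hA : ∀ S ∈ A, S.card = k) (hA' : ∀ S ∈ A', S.card = k)
    (h : cubeSet z A ⊆ cubeSet z A') : A ⊆ A' := by
  intro S hS
  classical
  set x : Fin n → Bool := fun j => if j ∈ S then z j else !(z j) with hx
  have hxA : x ∈ cubeSet z A := ⟨S, hS, fun i hi => by simp [hx, hi]⟩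
  obtain ⟨T, hT, hagree⟩ := h hxA
  have hTS : T ⊆ S := by
    intro j hj
    by_contra hjS
    have := hagree j hj
    simp [hx, hjS] at this
  have : T = S := Finset.eq_of_subset_of_card_le hTS (by rw [hA S hS, hA' T hT])
  rwa [← this]

lemma cubeSet_eq_fun {n k : ℕ} (z z' : Fin n → Bool) (A A' : Finset (Finset (Fin n)))
    (hA : ∀ S ∈ A, S.card = k) (hA' : ∀ S ∈ A', S.card = k)
    (hcov : ∀ i, ∃ S ∈ A, i ∈ S)
    (h : cubeSet z A = cubeSet z' A') : z = z' := by
  classical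
  funext i
  by_contra hi
  obtain ⟨S₀, hS₀, hiS₀⟩ := hcov i
  set x : Fin n → Bool := fun j => if j ∈ S₀ ∨ z j ≠ z' j then z j else !(z j) with hx
  have hxA : x ∈ cubeSet z A := ⟨S₀, hS₀, fun j hj => by simp [hx, hj]⟩
  rw [h] at hxA
  obtain ⟨T, hT, hagree⟩ := hxA
  have key : ∀ j ∈ T, j ∈ S₀ ∧ z j = z' j := by
    intro j hj
    have hxj := hagree j hj
    by_cases hc : j ∈ S₀ ∨ z j ≠ z' j
    · have hxz : x j = z j := by simp [hx, hc]
      rw [hxz] at hxj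
      refine ⟨?_, hxj⟩
      rcases hc with h1 | h2
      · exact h1
      · exact absurd hxj h2
    · push_neg at hc
      have hxz : x j = !(z j) := by simp [hx, hc.1, hc.2]
      rw [hxz, hc.2] at hxj
      simp at hxj
  have hTS : T ⊆ S₀ := fun j hj => (key j hj).1
  have hTeq : T = S₀ := Finset.eq_of_subset_of_card_le hTS (by rw [hA S₀ hS₀, hA' T hT])
  exact hi (key i (hTeq ▸ hiS₀)).2


/-- For all `n ≥ k ≥ 1`, `G_k(n) ≥ 2^n (2^{C(n,k)} - n 2^{C(n-1,k)})`. -/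
theorem numSatFunctions_lower_bound (k n : ℕ) (hk : 1 ≤ k) (hn : k ≤ n) :
    (2 : ℤ) ^ n * (2 ^ (n.choose k) - (n : ℤ) * 2 ^ ((n - 1).choose k))
      ≤ (numSatFunctions k n : ℤ) := by
  classical
  set K : Finset (Finset (Fin n)) := Finset.powersetCard k Finset.univ with hK
  set Cov : Finset (Finset (Finset (Fin n))) :=
    K.powerset.filter (fun A => ∀ i, ∃ S ∈ A, i ∈ S) with hCovdef
  have hKcard : K.card = n.choose k := by simp [hK]
  -- count of covering families
  have hbadi : ∀ i : Fin n, (K.filter (fun S => i ∉ S)).card = (n - 1).choose k := by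
    intro i
    have he : K.filter (fun S => i ∉ S) = Finset.powersetCard k (Finset.univ.erase i) := by
      ext S
      simp [hK, Finset.mem_powersetCard, Finset.subset_erase]
      tauto
    rw [he, Finset.card_powersetCard]
    simp [Finset.card_erase_of_mem]
  have hsplit : Cov.card
      + (K.powerset.filter (fun A => ¬ ∀ i, ∃ S ∈ A, i ∈ S)).card = 2 ^ (n.choose k) := by
    rw [hCovdef, Finset.card_filter_add_card_filter_not, Finset.card_powerset, hKcard]
  have hbadsub : K.powerset.filter (fun A => ¬ ∀ i, ∃ S ∈ A, i ∈ S)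
      ⊆ Finset.univ.biUnion (fun i : Fin n => (K.filter (fun S => i ∉ S)).powerset) := by
    intro A hA
    simp only [Finset.mem_filter, Finset.mem_powerset] at hA
    obtain ⟨hAK, hnc⟩ := hA
    push_neg at hnc
    obtain ⟨i, hi⟩ := hnc
    refine Finset.mem_biUnion.2 ⟨i, Finset.mem_univ i, Finset.mem_powerset.2 ?_⟩
    intro S hS
    exact Finset.mem_filter.2 ⟨hAK hS, hi S hS⟩
  have hbadcard : (K.powerset.filter (fun A => ¬ ∀ i, ∃ S ∈ A, i ∈ S)).card
      ≤ n * 2 ^ ((n - 1).choose k) := by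
    refine le_trans (Finset.card_le_card hbadsub) (le_trans Finset.card_biUnion_le ?_)
    have : ∀ i : Fin n, ((K.filter (fun S => i ∉ S)).powerset).card = 2 ^ ((n-1).choose k) := by
      intro i; rw [Finset.card_powerset, hbadi i]
    rw [Finset.sum_congr rfl (fun i _ => this i)]
    simp
  have hCovCard : (2 : ℤ) ^ (n.choose k) - (n : ℤ) * 2 ^ ((n - 1).choose k) ≤ (Cov.card : ℤ) := by
    have h1 : (Cov.card : ℤ) + ((K.powerset.filter (fun A => ¬ ∀ i, ∃ S ∈ A, i ∈ S)).card : ℤ)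
        = 2 ^ (n.choose k) := by exact_mod_cast congrArg (Nat.cast : ℕ → ℤ) hsplit
    have h2 : ((K.powerset.filter (fun A => ¬ ∀ i, ∃ S ∈ A, i ∈ S)).card : ℤ)
        ≤ (n : ℤ) * 2 ^ ((n - 1).choose k) := by exact_mod_cast hbadcard
    linarith
  -- the injection
  set g : (Fin n → Bool) × Finset (Finset (Fin n)) → Set (Fin n → Bool) :=
    fun p => SatSet (p.2.image (clauseOf p.1)) with hg
  set P : Finset ((Fin n → Bool) × Finset (Finset (Fin n))) := Finset.univ ×ˢ Cov with hP
  have hmem : ∀ p ∈ P, (∀ S ∈ p.2, S.card = k) ∧ (∀ i, ∃ S ∈ p.2, i ∈ S) := by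
    intro p hp
    rw [hP, Finset.mem_product] at hp
    have h2 := hp.2
    rw [hCovdef, Finset.mem_filter, Finset.mem_powerset] at h2
    refine ⟨fun S hS => ?_, h2.2⟩
    have := h2.1 hS
    rwa [hK, Finset.mem_powersetCard_univ] at this
  have hsub : g '' ↑P ⊆ SatFunctions n k := by
    rintro _ ⟨p, hp, rfl⟩
    obtain ⟨hcard, hcov⟩ := hmem p (Finset.mem_coe.1 hp)
    refine ⟨p.2.image (clauseOf p.1), ⟨?_, ?_⟩, rfl⟩
    · obtain ⟨S, hS, _⟩ := hcov ⟨0, by omega⟩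
      exact ⟨clauseOf p.1 S, Finset.mem_image_of_mem _ hS⟩
    · rintro D hD
      obtain ⟨S, hS, rfl⟩ := Finset.mem_image.1 hD
      exact isClause_clauseOf _ _ (hcard S hS)
  have hinj : Set.InjOn g ↑P := by
    rintro p hp q hq hpq
    obtain ⟨hc1, hcov1⟩ := hmem p (Finset.mem_coe.1 hp)
    obtain ⟨hc2, hcov2⟩ := hmem q (Finset.mem_coe.1 hq)
    rw [hg] at hpq
    simp only at hpq
    rw [satSet_image, satSet_image] at hpq
    have hz : p.1 = q.1 := cubeSet_eq_fun (k := k) p.1 q.1 p.2 q.2 hc1 hc2 hcov1 hpq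
    rw [hz] at hpq
    have hA : p.2 = q.2 := by
      apply Finset.Subset.antisymm
      · exact cubeSet_subset_mono (k := k) q.1 p.2 q.2 hc1 hc2 hpq.le
      · exact cubeSet_subset_mono (k := k) q.1 q.2 p.2 hc2 hc1 hpq.ge
    exact Prod.ext hz hA
  have hcard_le : P.card ≤ numSatFunctions k n := by
    have h1 := Set.ncard_le_ncard hsub (Set.toFinite _)
    rw [Set.ncard_image_of_injOn hinj, Set.ncard_coe_finset] at h1
    have h2 : numSatFunctions k n = (SatFunctions n k).ncard := Nat.card_coe_set_eq _
    omega
  have hPcard : P.card = 2 ^ n * Cov.card := by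
    rw [hP, Finset.card_product, Finset.card_univ]
    congr 1
    simp
  calc (2:ℤ)^n * (2 ^ (n.choose k) - (n : ℤ) * 2 ^ ((n-1).choose k))
      ≤ (2:ℤ)^n * Cov.card := mul_le_mul_of_nonneg_left hCovCard (by positivity)
    _ = (P.card : ℤ) := by rw [hPcard]; push_cast; ring
    _ ≤ _ := by exact_mod_cast hcard_le
end

section
/- Let 0 ≤ α < 1/2 and let G be a (simple) graph on s vertices with at least (1−α)·\binom{s}{2} edges. Then G has a connected component with at least (1−α)·s vertices. -/
/-!
A vertex has all its neighbours in its own component, so its degree is less than the size of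
that component. If the largest component has `m` vertices, summing degrees gives
`(1 - α) s (s - 1) ≤ 2 |E| ≤ s (m - 1)`, hence `m ≥ (1 - α) s + α ≥ (1 - α) s`.
-/

open Finset

namespace SimpleGraph

variable {V : Type*} [Fintype V] (G : SimpleGraph V) [DecidableRel G.Adj]

theorem degree_lt_card_supp_connectedComponentMk (v : V) :
    G.degree v < Nat.card (G.connectedComponentMk v).supp := by
  have hsub : G.neighborSet v ⊂ (G.connectedComponentMk v).supp :=
    Set.ssubset_iff_of_subset (fun w hw => ConnectedComponent.sound (G.adj_symm hw).reachable)
      |>.2 ⟨v, rfl, G.notMem_neighborSet_self⟩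
  rw [← card_neighborSet_eq_degree, ← Nat.card_eq_fintype_card, Nat.card_coe_set_eq,
    Nat.card_coe_set_eq]
  exact Set.ncard_lt_ncard hsub

theorem two_mul_card_edgeFinset_le {m : ℕ}
    (hm : ∀ c : G.ConnectedComponent, Nat.card c.supp ≤ m) :
    2 * #G.edgeFinset ≤ Fintype.card V * (m - 1) := by
  rw [← sum_degrees_eq_twice_card_edges, ← smul_eq_mul, ← card_univ, ← sum_const]
  exact sum_le_sum fun v _ =>
    Nat.le_sub_one_of_lt ((G.degree_lt_card_supp_connectedComponentMk v).trans_le (hm _))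

end SimpleGraph

theorem large_component_of_dense_general {V : Type*} [Fintype V] [Nonempty V]
    (G : SimpleGraph V) [DecidableRel G.Adj]
    (s : ℕ) (hs : Fintype.card V = s)
    (α : ℝ) (hα0 : 0 ≤ α)
    (hedges : (1 - α) * (s.choose 2 : ℝ) ≤ (G.edgeFinset.card : ℝ)) :
    ∃ c : G.ConnectedComponent, (1 - α) * s ≤ (Nat.card c.supp : ℝ) := by
  obtain ⟨c, hc_max⟩ := Finite.exists_max fun c : G.ConnectedComponent => Nat.card c.supp
  refine ⟨c, ?_⟩
  have hc_pos : 1 ≤ Nat.card c.supp :=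
    Nat.card_pos_iff.2 ⟨c.nonempty_supp.to_subtype, inferInstance⟩
  have hs_pos : (0 : ℝ) < s := by rw [← hs]; exact_mod_cast Fintype.card_pos
  have hedges_le : (2 * G.edgeFinset.card : ℝ) ≤ s * (Nat.card c.supp - 1) := by
    rw [← hs]; exact_mod_cast G.two_mul_card_edgeFinset_le hc_max
  rw [Nat.cast_choose_two] at hedges
  have hratio : (1 - α) * (s - 1) ≤ Nat.card c.supp - 1 :=
    le_of_mul_le_mul_left (by linarith) hs_pos
  linarith

/-- Any graph on `s` vertices with at least `(1-α)·C(s,2)` edges (`0 ≤ α < 1/2`)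
has a connected component with at least `(1-α)·s` vertices. -/
theorem large_component_of_dense {V : Type*} [Fintype V] [Nonempty V] [DecidableEq V]
    (G : SimpleGraph V) [DecidableRel G.Adj]
    (s : ℕ) (hs : Fintype.card V = s)
    (α : ℝ) (hα0 : 0 ≤ α) (hα : α < 1 / 2)
    (hedges : (1 - α) * (s.choose 2 : ℝ) ≤ (G.edgeFinset.card : ℝ)) :
    ∃ c : G.ConnectedComponent, (1 - α) * s ≤ (Nat.card c.supp : ℝ) :=
  large_component_of_dense_general G s hs α hα0 hedges
end

section
/- Every finite simple graph G admits an orientation of its edges in which every vertex has out-degree at most ⌈√(|E(G)|/2)⌉. -/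
/-!
Put `d = ⌈√(m/2)⌉` for `m = |E(G)|`. Choosing, for every edge, one of its endpoints as its tail so
that no vertex is the tail of more than `d` edges is a matching problem with capacities, and by
Hall's theorem it suffices that every set `S` of edges has at most `d` times as many edges as
endpoints. If `S` spans `k` vertices then `|S| ≤ min(m, k(k-1)/2)`, and this is at most `d k`: for
`k ≤ 2d` because `k - 1 < 2d`, and for `k ≥ 2d` because `m ≤ 2d² ≤ d k`.
-/

open Finset

/-- Hall's theorem with every `a : α` of capacity `d`, obtained by replacing `a` with `d` copies. -/
theorem Finset.exists_forall_mem_card_fiber_le_of_card_le_mul {ι α : Type*} [Fintype ι]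
    [DecidableEq α] (t : ι → Finset α) (d : ℕ)
    (h : ∀ s : Finset ι, #s ≤ d * #(s.biUnion t)) :
    ∃ f : ι → α, (∀ i, f i ∈ t i) ∧ ∀ a, #{i | f i = a} ≤ d := by
  obtain ⟨g, hg_inj, hg_mem⟩ := (all_card_le_biUnion_card_iff_exists_injective
    fun i => t i ×ˢ (univ : Finset (Fin d))).1 fun s => by
      have : s.biUnion (fun i => t i ×ˢ univ) = s.biUnion t ×ˢ (univ : Finset (Fin d)) := by
        ext; simp
      rw [this, card_product, card_univ, Fintype.card_fin, mul_comm]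
      exact h s
  refine ⟨fun i => (g i).1, fun i => (mem_product.1 (hg_mem i)).1, fun a => ?_⟩
  calc #{i | (g i).1 = a} ≤ #(univ : Finset (Fin d)) :=
        card_le_card_of_injOn (fun i => (g i).2) (fun _ _ => mem_coe.2 (mem_univ _))
          fun i hi j hj hij => hg_inj <| Prod.ext
            (((mem_filter.1 hi).2).trans ((mem_filter.1 hj).2).symm) hij
    _ = d := by rw [card_univ, Fintype.card_fin]

namespace SimpleGraph

variable {V : Type*} [DecidableEq V] (G : SimpleGraph V)

theorem exists_orientation_of_tail [Fintype V] [DecidableRel G.Adj] (tail : G.edgeSet → V)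
    (htail : ∀ e : G.edgeSet, tail e ∈ (e : Sym2 V)) :
    ∃ D : Finset (V × V),
      (∀ p ∈ D, G.Adj p.1 p.2) ∧
      (∀ u v : V, G.Adj u v → ((u, v) ∈ D ↔ (v, u) ∉ D)) ∧
      ∀ v : V, (D.filter fun p => p.1 = v).card ≤ #{e | tail e = v} := by
  set D : Finset (V × V) := {p | ∃ h : s(p.1, p.2) ∈ G.edgeSet, tail ⟨s(p.1, p.2), h⟩ = p.1}
  have mem_D {a b : V} (h : G.Adj a b) : (a, b) ∈ D ↔ tail ⟨s(a, b), h⟩ = a := by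
    simp [D, h]
  refine ⟨D, fun p hp => (mem_filter.1 hp).2.1, fun u v huv => ?_, fun v => ?_⟩
  · have hswap : (⟨s(v, u), huv.symm⟩ : G.edgeSet) = ⟨s(u, v), huv⟩ :=
      Subtype.ext Sym2.eq_swap
    rw [mem_D huv, mem_D huv.symm, hswap]
    have hne : u ≠ v := G.ne_of_adj huv
    rcases Sym2.mem_iff.1 (htail ⟨s(u, v), huv⟩) with h | h <;> simp [h, hne, hne.symm]
  · refine card_le_card_of_surjOn (fun e => (tail e, Sym2.Mem.other' (htail e))) ?_
    rintro ⟨a, b⟩ hp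
    obtain ⟨hpD, rfl⟩ := mem_filter.1 hp
    have hab : G.Adj a b := (mem_filter.1 hpD).2.1
    have htab := (mem_D hab).1 hpD
    refine ⟨⟨s(a, b), hab⟩, by simpa using htab, ?_⟩
    -- `other'` depends on the membership proof, so `htab` cannot be rewritten in place.
    have other_eq : ∀ x (hx : x ∈ s(a, b)), x = a → Sym2.Mem.other' hx = b := by
      rintro x hx rfl
      exact Sym2.congr_right.1 (Sym2.other_spec' hx)
    exact Prod.ext htab (other_eq _ (htail _) htab)

theorem card_le_choose_two_card_biUnion (s : Finset G.edgeSet) :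
    #s ≤ (#(s.biUnion fun e => (e : Sym2 V).toFinset)).choose 2 := by
  set T := s.biUnion fun e => (e : Sym2 V).toFinset
  rw [← Sym2.card_image_offDiag]
  refine card_le_card_of_injOn Subtype.val ?_ Subtype.val_injective.injOn
  rintro ⟨e, he⟩ hes
  induction e using Sym2.ind with
  | h a b =>
    have hT : ∀ x ∈ s(a, b), x ∈ T := fun x hx =>
      mem_biUnion.2 ⟨_, hes, Sym2.mem_toFinset.2 hx⟩
    exact mem_coe.2 <| mem_image.2 ⟨(a, b), mem_offDiag.2
      ⟨hT a (Sym2.mem_mk_left a b), hT b (Sym2.mem_mk_right a b), G.ne_of_adj he⟩, rfl⟩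

end SimpleGraph

theorem Nat.le_mul_of_le_two_mul_sq_of_le_choose_two {a d k : ℕ} (hd : a ≤ 2 * d ^ 2)
    (hk : a ≤ k.choose 2) : a ≤ d * k := by
  rcases le_or_gt k (2 * d) with hkd | hkd
  · refine hk.trans ?_
    rw [Nat.choose_two_right]
    refine Nat.div_le_of_le_mul ?_
    calc k * (k - 1) ≤ k * (2 * d) := Nat.mul_le_mul_left k (by omega)
      _ = 2 * (d * k) := by ring
  · calc a ≤ 2 * d ^ 2 := hd
      _ = d * (2 * d) := by ring
      _ ≤ d * k := Nat.mul_le_mul_left d hkd.le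

theorem Nat.le_two_mul_ceil_sqrt_half_sq (m : ℕ) : m ≤ 2 * ⌈Real.sqrt ((m : ℝ) / 2)⌉₊ ^ 2 := by
  have hceil : Real.sqrt ((m : ℝ) / 2) ≤ ⌈Real.sqrt ((m : ℝ) / 2)⌉₊ := Nat.le_ceil _
  have hsq : Real.sqrt ((m : ℝ) / 2) ^ 2 = m / 2 := Real.sq_sqrt (by positivity)
  have : (m : ℝ) ≤ 2 * (⌈Real.sqrt ((m : ℝ) / 2)⌉₊ : ℝ) ^ 2 := by
    nlinarith [pow_le_pow_left₀ (Real.sqrt_nonneg _) hceil 2]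
  exact_mod_cast this

/-- Every finite simple graph admits an orientation of its edges in which every
vertex has out-degree at most `⌈√(|E(G)|/2)⌉`. -/
theorem orientation_bounded_outdegree {V : Type*} [Fintype V] [DecidableEq V]
    (G : SimpleGraph V) [DecidableRel G.Adj] :
    ∃ D : Finset (V × V),
      (∀ p ∈ D, G.Adj p.1 p.2) ∧
      (∀ u v : V, G.Adj u v → ((u, v) ∈ D ↔ (v, u) ∉ D)) ∧
      ∀ v : V, (D.filter fun p => p.1 = v).card
        ≤ ⌈Real.sqrt ((G.edgeFinset.card : ℝ) / 2)⌉₊ := by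
  set d := ⌈Real.sqrt ((G.edgeFinset.card : ℝ) / 2)⌉₊
  have hall : ∀ s : Finset G.edgeSet, #s ≤ d * #(s.biUnion fun e => (e : Sym2 V).toFinset) :=
    fun s => Nat.le_mul_of_le_two_mul_sq_of_le_choose_two
      (((card_le_univ s).trans_eq G.edgeFinset_card.symm).trans
        (Nat.le_two_mul_ceil_sqrt_half_sq _))
      (G.card_le_choose_two_card_biUnion s)
  obtain ⟨tail, htail_mem, htail_card⟩ :=
    exists_forall_mem_card_fiber_le_of_card_le_mul _ d hall
  obtain ⟨D, hD_adj, hD_orient, hD_card⟩ :=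
    G.exists_orientation_of_tail tail fun e => Sym2.mem_toFinset.1 (htail_mem e)
  exact ⟨D, hD_adj, hD_orient, fun v => (hD_card v).trans (htail_card v)⟩
end

section
/- Let C be an irredundant 3-SAT formula on n Boolean variables. If the clause ū ∧ v ∧ w belongs to C (u, v, w distinct variables) and a is a variable not in {u, v, w}, then C does not contain both of the positive clauses a ∧ u ∧ v and a ∧ v ∧ w. -/
/-!
Take a witness `x` of the clause `a ∧ v ∧ w`: it sets `a`, `v`, `w` to true and satisfies no
other clause of `C`. Whatever `x u` is, `x` then satisfies `a ∧ u ∧ v` (if `x u` is true) or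
`ū ∧ v ∧ w` (if it is false), and neither of these clauses is `a ∧ v ∧ w`,
since each has a literal on `u ∉ {a, v, w}`.
-/

section SatClause

variable {n : ℕ} {x : Fin n → Bool}

@[simp]
theorem satClause_insert (p : Fin n × Bool) (D : Finset (Fin n × Bool)) :
    SatClause (insert p D) x ↔ x p.1 = p.2 ∧ SatClause D x :=
  Finset.forall_mem_insert _ _ _

@[simp]
theorem satClause_singleton (p : Fin n × Bool) : SatClause {p} x ↔ x p.1 = p.2 := by
  simp [SatClause]

end SatClause

theorem Irredundant.exists_witness {n : ℕ} {C : Finset (Finset (Fin n × Bool))}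
    (hirr : Irredundant C) {D : Finset (Fin n × Bool)} (hD : D ∈ C) :
    ∃ x, SatClause D x ∧ ∀ D' ∈ C, D' ≠ D → ¬ SatClause D' x := by
  obtain ⟨x, ⟨D', hD', hx⟩, hx_erase⟩ :=
    Set.exists_of_ssubset (hirr _ (Finset.erase_ssubset hD))
  have hunique : ∀ D' ∈ C, D' ≠ D → ¬ SatClause D' x :=
    fun D' hD' hne hsat => hx_erase ⟨D', Finset.mem_erase.mpr ⟨hne, hD'⟩, hsat⟩
  obtain rfl : D' = D := by_contra fun hne => hunique D' hD' hne hx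
  exact ⟨x, hx, hunique⟩

theorem not_both_positive_clauses_general (n : ℕ)
    (C : Finset (Finset (Fin n × Bool)))
    (hirr : Irredundant C)
    (u v w a : Fin n)
    (huv : u ≠ v) (huw : u ≠ w)
    (hau : a ≠ u)
    (h : ({(u, false), (v, true), (w, true)} : Finset (Fin n × Bool)) ∈ C) :
    ¬ (({(a, true), (u, true), (v, true)} : Finset (Fin n × Bool)) ∈ C ∧
       ({(a, true), (v, true), (w, true)} : Finset (Fin n × Bool)) ∈ C) := by
  rintro ⟨hauv, havw⟩
  obtain ⟨x, ⟨hxa, hxv, hxw⟩, hunique⟩ := by simpa using hirr.exists_witness havw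
  cases hxu : x u
  · refine hunique _ h (ne_of_mem_of_not_mem' (a := (u, false)) (by simp) (by simp)) ?_
    simp [hxu, hxv, hxw]
  · refine hunique _ hauv (ne_of_mem_of_not_mem' (a := (u, true)) (by simp) ?_) ?_
    · simp [hau.symm, huv, huw]
    · simp [hxa, hxu, hxv]

/-- If the clause `ū ∧ v ∧ w` belongs to an irredundant 3-SAT formula `C` and
`a ∉ {u, v, w}`, then `C` does not contain both positive clauses `a ∧ u ∧ v`
and `a ∧ v ∧ w`. -/
theorem not_both_positive_clauses (n : ℕ)
    (C : Finset (Finset (Fin n × Bool)))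
    (hC : IsFormula n 3 C) (hirr : Irredundant C)
    (u v w a : Fin n)
    (huv : u ≠ v) (huw : u ≠ w) (hvw : v ≠ w)
    (hau : a ≠ u) (hav : a ≠ v) (haw : a ≠ w)
    (h : ({(u, false), (v, true), (w, true)} : Finset (Fin n × Bool)) ∈ C) :
    ¬ (({(a, true), (u, true), (v, true)} : Finset (Fin n × Bool)) ∈ C ∧
       ({(a, true), (v, true), (w, true)} : Finset (Fin n × Bool)) ∈ C) :=
  not_both_positive_clauses_general n C hirr u v w a huv huw hau h
end

section
/- Let C be an irredundant 3-SAT formula on n Boolean variables and let u, v, w be distinct variables. If there exist distinct variables a, b not in {u, v, w} such that the positive clauses a ∧ b ∧ u, a ∧ b ∧ v and a ∧ b ∧ w all belong to C, then the clause ū ∧ v̄ ∧ w does not belong to C. -/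
/-!
Take a witness `x` of the clause `a ∧ b ∧ w`: it sets `a`, `b`, `w` true and satisfies no other
clause of `C`. Not satisfying `a ∧ b ∧ u` and `a ∧ b ∧ v` forces `x u = x v = false`, so `x` also
satisfies `ū ∧ v̄ ∧ w`, which therefore cannot be a clause of `C`.
-/

section

variable {n : ℕ}

def IsWitness (C : Finset (Finset (Fin n × Bool))) (D : Finset (Fin n × Bool))
    (x : Fin n → Bool) : Prop :=
  SatClause D x ∧ ∀ E ∈ C, SatClause E x → E = D

theorem satClause_triple {p q r : Fin n × Bool} {x : Fin n → Bool} :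
    SatClause {p, q, r} x ↔ x p.1 = p.2 ∧ x q.1 = q.2 ∧ x r.1 = r.2 := by
  simp [SatClause]

theorem Irredundant.exists_isWitness {C : Finset (Finset (Fin n × Bool))} (hirr : Irredundant C)
    {D : Finset (Fin n × Bool)} (hD : D ∈ C) : ∃ x, IsWitness C D x := by
  obtain ⟨x, ⟨E, hEC, hEx⟩, hx⟩ := Set.exists_of_ssubset (hirr _ (Finset.erase_ssubset hD))
  have honly : ∀ E' ∈ C, SatClause E' x → E' = D := fun E' hE'C hE'x =>
    by_contra fun hne => hx ⟨E', Finset.mem_erase.mpr ⟨hne, hE'C⟩, hE'x⟩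
  exact ⟨x, honly E hEC hEx ▸ hEx, honly⟩

theorem IsWitness.not_satClause {C : Finset (Finset (Fin n × Bool))} {D E : Finset (Fin n × Bool)}
    {x : Fin n → Bool} (hx : IsWitness C D x) (hE : E ∈ C) {ℓ : Fin n × Bool} (hℓE : ℓ ∈ E)
    (hℓD : ℓ ∉ D) : ¬ SatClause E x :=
  fun hEx => ne_of_mem_of_not_mem' hℓE hℓD (hx.2 E hE hEx)

end

theorem no_doubly_negated_clause_general (n : ℕ)
    (C : Finset (Finset (Fin n × Bool)))
    (hirr : Irredundant C)
    (u v w : Fin n) (huw : u ≠ w) (hvw : v ≠ w)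
    (a b : Fin n)
    (hau : a ≠ u) (hav : a ≠ v)
    (hbu : b ≠ u) (hbv : b ≠ v)
    (h1 : ({(a, true), (b, true), (u, true)} : Finset (Fin n × Bool)) ∈ C)
    (h2 : ({(a, true), (b, true), (v, true)} : Finset (Fin n × Bool)) ∈ C)
    (h3 : ({(a, true), (b, true), (w, true)} : Finset (Fin n × Bool)) ∈ C) :
    ({(u, false), (v, false), (w, true)} : Finset (Fin n × Bool)) ∉ C := by
  intro hD
  obtain ⟨x, hx⟩ := hirr.exists_isWitness h3
  obtain ⟨hxa, hxb, hxw⟩ := satClause_triple.mp hx.1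
  have hxu : x u = false := by
    have := hx.not_satClause h1 (ℓ := (u, true)) (by simp) (by simp [hau.symm, hbu.symm, huw])
    simpa [satClause_triple, hxa, hxb] using this
  have hxv : x v = false := by
    have := hx.not_satClause h2 (ℓ := (v, true)) (by simp) (by simp [hav.symm, hbv.symm, hvw])
    simpa [satClause_triple, hxa, hxb] using this
  exact hx.not_satClause hD (ℓ := (u, false)) (by simp) (by simp)
    (satClause_triple.mpr ⟨hxu, hxv, hxw⟩)

/-- If `C` is an irredundant 3-SAT formula, `u, v, w` are distinct variables and
there are distinct variables `a, b ∉ {u, v, w}` with `a ∧ b ∧ u`, `a ∧ b ∧ v`,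
`a ∧ b ∧ w` all in `C`, then the clause `ū ∧ v̄ ∧ w` is not in `C`. -/
theorem no_doubly_negated_clause (n : ℕ)
    (C : Finset (Finset (Fin n × Bool)))
    (hC : IsFormula n 3 C) (hirr : Irredundant C)
    (u v w : Fin n) (huv : u ≠ v) (huw : u ≠ w) (hvw : v ≠ w)
    (a b : Fin n) (hab : a ≠ b)
    (hau : a ≠ u) (hav : a ≠ v) (haw : a ≠ w)
    (hbu : b ≠ u) (hbv : b ≠ v) (hbw : b ≠ w)
    (h1 : ({(a, true), (b, true), (u, true)} : Finset (Fin n × Bool)) ∈ C)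
    (h2 : ({(a, true), (b, true), (v, true)} : Finset (Fin n × Bool)) ∈ C)
    (h3 : ({(a, true), (b, true), (w, true)} : Finset (Fin n × Bool)) ∈ C) :
    ({(u, false), (v, false), (w, true)} : Finset (Fin n × Bool)) ∉ C :=
  no_doubly_negated_clause_general n C hirr u v w huw hvw a b hau hav hbu hbv h1 h2 h3
end

section
/- Let B(n) = 2^{n + \binom{n}{3}}. For every c' > 0 there exists n₁ such that the following holds: if I : ℕ → ℝ_{≥0} satisfies, for every n ≥ n₁, I(n) < (1 + 2^{−c'·n})·B(n) + 2^{(1−c')·\binom{n}{2}}·I(n−1) + 2^{(1−c')·3·\binom{n}{2}}·I(n−3), then there exists a constant Δ such that I(n) ≤ (1 + Δ·2^{−c'·n})·B(n) for all n. -/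
/-!
Strong induction on `n` for the bound `I n ≤ (1 + Δ 2^{-c'n}) B(n)`. Since `log₂ B` is cubic,
`B(n - d) / B(n) = 2^{-d n²/2 + O(n)}`, so for every lag `d ≥ 1` the coefficient
`2^{(1-c') d C(n,2)} B(n - d) / B(n) = 2^{-c' d n²/2 + O(n)}` is eventually below `2^{-c'n} / 8`.
The two lagged terms then contribute at most `Δ 2^{-c'n} B(n) / 2`, which absorbs the error
term `2^{-c'n} B(n)` as soon as `Δ ≥ 2`; the finitely many `n` below the threshold fix `Δ`.
-/

noncomputable def Bfun (n : ℕ) : ℝ := 2 ^ (n + n.choose 3)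

open Filter

section Recursion

variable {B ε : ℕ → ℝ}

lemma exists_forall_lt_le_one_add_mul (hB : ∀ n, 0 < B n) (hε : ∀ n, 0 < ε n) (I : ℕ → ℝ)
    (n₀ : ℕ) : ∃ Δ, 2 ≤ Δ ∧ ∀ n < n₀, I n ≤ (1 + Δ * ε n) * B n := by
  set f : ℕ → ℝ := fun n => (I n / B n - 1) / ε n
  obtain ⟨M, hM⟩ := ((Finset.range n₀).image f).exists_le
  refine ⟨max M 2, le_max_right _ _, fun n hn => ?_⟩
  have hfM : f n ≤ max M 2 :=
    (hM _ (Finset.mem_image_of_mem f (Finset.mem_range.2 hn))).trans (le_max_left _ _)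
  calc I n = (1 + f n * ε n) * B n := by
        simp only [f]; field_simp [(hε n).ne', (hB n).ne']; ring
    _ ≤ (1 + max M 2 * ε n) * B n := by
        gcongr
        · exact (hB n).le
        · exact (hε n).le

theorem exists_forall_le_one_add_mul_of_recursion {I a b : ℕ → ℝ} {n₀ j k : ℕ}
    (hj : 0 < j) (hk : 0 < k) (hn₀ : 0 < n₀) (hB : ∀ n, 0 < B n) (hε : ∀ n, 0 < ε n)
    (ha : ∀ n, n₀ ≤ n → 0 ≤ a n ∧ a n * (1 + ε (n - j)) * B (n - j) ≤ ε n * B n / 4)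
    (hb : ∀ n, n₀ ≤ n → 0 ≤ b n ∧ b n * (1 + ε (n - k)) * B (n - k) ≤ ε n * B n / 4)
    (hrec : ∀ n, n₀ ≤ n → I n ≤ (1 + ε n) * B n + a n * I (n - j) + b n * I (n - k)) :
    ∃ Δ : ℝ, ∀ n, I n ≤ (1 + Δ * ε n) * B n := by
  obtain ⟨Δ, hΔ, hbase⟩ := exists_forall_lt_le_one_add_mul hB hε I n₀
  refine ⟨Δ, fun n => ?_⟩
  induction n using Nat.strong_induction_on with
  | _ n ih =>
  rcases lt_or_ge n n₀ with hn | hn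
  · exact hbase n hn
  have lagged {c : ℝ} {m : ℕ} (hm : 0 < m) (hc : 0 ≤ c)
      (hcm : c * (1 + ε (n - m)) * B (n - m) ≤ ε n * B n / 4) :
      c * I (n - m) ≤ Δ * (ε n * B n / 4) := by
    have hcB : 0 ≤ c * B (n - m) := mul_nonneg hc (hB _).le
    calc c * I (n - m) ≤ c * ((1 + Δ * ε (n - m)) * B (n - m)) :=
          mul_le_mul_of_nonneg_left (ih _ (by omega)) hc
      -- `1 + Δ ε ≤ Δ (1 + ε)` because `Δ ≥ 1`
      _ ≤ Δ * (c * (1 + ε (n - m)) * B (n - m)) := by nlinarith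
      _ ≤ Δ * (ε n * B n / 4) := by gcongr
  have hεB : 0 ≤ ε n * B n := (mul_pos (hε n) (hB n)).le
  nlinarith [hrec n hn, lagged hj (ha n hn).1 (ha n hn).2, lagged hk (hb n hn).1 (hb n hn).2]

end Recursion

lemma cast_choose_three (n : ℕ) : (n.choose 3 : ℝ) = n * (n - 1) * (n - 2) / 6 := by
  induction n with
  | zero => simp
  | succ n ih =>
    rw [Nat.choose_succ_succ]
    push_cast [ih, Nat.cast_choose_two]
    ring

lemma Bfun_eq_rpow (n : ℕ) : Bfun n = (2 : ℝ) ^ ((n : ℝ) + n * (n - 1) * (n - 2) / 6) := by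
  rw [Bfun, ← Real.rpow_natCast]
  push_cast [cast_choose_three]
  rfl

lemma Bfun_pos (n : ℕ) : 0 < Bfun n := by
  rw [Bfun]; positivity

lemma cubic_exponent_le {c d x : ℝ} (hc : 0 < c) (hd : 1 ≤ d) (hx : d ^ 2 + d + 2 ≤ c * (x - 3)) :
    (1 - c) * d * (x * (x - 1) / 2) + ((x - d) + (x - d) * (x - d - 1) * (x - d - 2) / 6)
      ≤ -(c * x) - 3 + (x + x * (x - 1) * (x - 2) / 6) := by
  have hx3 : 3 < x := by
    by_contra! h
    nlinarith [mul_nonpos_of_nonneg_of_nonpos hc.le (by linarith : x - 3 ≤ 0)]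
  nlinarith [mul_le_mul_of_nonneg_left hx (by linarith : (0:ℝ) ≤ x),
    mul_le_mul_of_nonneg_left hd
      (mul_nonneg hc.le (mul_nonneg (by linarith : (0:ℝ) ≤ x) (by linarith : (0:ℝ) ≤ x - 1)))]

lemma two_rpow_mul_Bfun_sub_le {c : ℝ} (hc : 0 < c) {d n : ℕ} (hd : 0 < d) (hdn : d ≤ n)
    (hn : (d : ℝ) ^ 2 + d + 2 ≤ c * (n - 3)) :
    2 ^ ((1 - c) * d * (n.choose 2 : ℝ)) * Bfun (n - d) ≤ 2 ^ (-(c * n)) * Bfun n / 8 := by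
  have h8 : (8 : ℝ) = 2 ^ (3 : ℝ) := by norm_num
  rw [Bfun_eq_rpow, Bfun_eq_rpow, Nat.cast_sub hdn, Nat.cast_choose_two, h8,
    ← Real.rpow_add two_pos, ← Real.rpow_add two_pos, ← Real.rpow_sub two_pos]
  refine Real.rpow_le_rpow_of_exponent_le one_le_two ?_
  have := cubic_exponent_le hc (by exact_mod_cast hd) hn
  linarith

lemma eventually_two_rpow_mul_Bfun_sub_le {c : ℝ} (hc : 0 < c) {d : ℕ} (hd : 0 < d) :
    ∀ᶠ n : ℕ in atTop, 0 ≤ (2 : ℝ) ^ ((1 - c) * d * (n.choose 2 : ℝ)) ∧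
      2 ^ ((1 - c) * d * (n.choose 2 : ℝ)) * (1 + 2 ^ (-(c * (n - d : ℕ)))) * Bfun (n - d)
        ≤ 2 ^ (-(c * n)) * Bfun n / 4 := by
  have hlarge : ∀ᶠ n : ℕ in atTop, (d : ℝ) ^ 2 + d + 2 ≤ c * (n - 3) :=
    (tendsto_natCast_atTop_atTop.atTop_add tendsto_const_nhds).const_mul_atTop hc
      |>.eventually_ge_atTop _
  filter_upwards [eventually_ge_atTop d, hlarge] with n hdn hn
  have hsmall : (2 : ℝ) ^ (-(c * (n - d : ℕ))) ≤ 1 :=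
    Real.rpow_le_one_of_one_le_of_nonpos one_le_two (neg_nonpos.2 (by positivity))
  have hpos : 0 ≤ (2 : ℝ) ^ ((1 - c) * d * (n.choose 2 : ℝ)) * Bfun (n - d) :=
    (mul_pos (by positivity) (Bfun_pos _)).le
  refine ⟨by positivity, ?_⟩
  nlinarith [two_rpow_mul_Bfun_sub_le hc hd hdn hn]

/-- For every `c' > 0` there is `n₁` such that any nonnegative sequence `I`
satisfying, for all `n ≥ n₁`,
`I(n) < (1 + 2^{-c'n}) B(n) + 2^{(1-c')C(n,2)} I(n-1) + 2^{(1-c')3C(n,2)} I(n-3)`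
satisfies `I(n) ≤ (1 + Δ 2^{-c'n}) B(n)` for all `n`, for some constant `Δ`. -/
theorem recursion_implies_asymptotics (c' : ℝ) (hc' : 0 < c') :
    ∃ n₁ : ℕ, ∀ I : ℕ → ℝ, (∀ n, 0 ≤ I n) →
      (∀ n : ℕ, n₁ ≤ n →
        I n < (1 + 2 ^ (-(c' * n))) * Bfun n
          + 2 ^ ((1 - c') * (n.choose 2 : ℝ)) * I (n - 1)
          + 2 ^ ((1 - c') * 3 * (n.choose 2 : ℝ)) * I (n - 3)) →
      ∃ Δ : ℝ, ∀ n : ℕ, I n ≤ (1 + Δ * 2 ^ (-(c' * n))) * Bfun n := by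
  have lag1 := eventually_two_rpow_mul_Bfun_sub_le hc' (d := 1) one_pos
  have lag3 := eventually_two_rpow_mul_Bfun_sub_le hc' (d := 3) three_pos
  simp only [Nat.cast_one, mul_one, Nat.cast_ofNat] at lag1 lag3
  obtain ⟨n₁, hn₁⟩ := eventually_atTop.1 ((eventually_gt_atTop 0).and (lag1.and lag3))
  refine ⟨n₁, fun I _ hrec => ?_⟩
  exact exists_forall_le_one_add_mul_of_recursion one_pos three_pos (hn₁ n₁ le_rfl).1 Bfun_pos
    (fun n => by positivity) (fun n hn => (hn₁ n hn).2.1) (fun n hn => (hn₁ n hn).2.2)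
    (fun n hn => (hrec n hn).le)
end
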